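/- A graph G is switching-equivalent to the line graph of a graph on eight vertices if and only if the cone graph over G (G with an added universal vertex) is E_8-representable. -/

import Mathlib

/-- Seidel switching of a graph `K` with respect to a vertex set `X`: adjacency between
pairs with exactly one endpoint in `X` is complemented, other adjacencies are kept. -/
def SimpleGraph.seidelSwitch {V : Type*} (K : SimpleGraph V) (X : Set V) :
    SimpleGraph V where
  Adj u v := u ≠ v ∧ (K.Adj u v ↔ ¬ Xor' (u ∈ X) (v ∈ X))
  symm := ⟨fun u v h => ⟨h.1.symm, by rw [K.adj_comm]; unfold Xor' at *; rw [xor_comm]; exact h.2⟩⟩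
  loopless := ⟨fun v h => h.1 rfl⟩
/-- The `E₈` root system: vectors in `ℤ⁸` with two coordinates `±2` and the rest `0`,
together with the `±1`-vectors having an even number of `−1` coordinates. -/
def E8 : Set (Fin 8 → ℤ) :=
  {x | (∃ i j : Fin 8, i ≠ j ∧ (x i = 2 ∨ x i = -2) ∧ (x j = 2 ∨ x j = -2) ∧
          ∀ k, k ≠ i → k ≠ j → x k = 0) ∨
       ((∀ k, x k = 1 ∨ x k = -1) ∧
          Even (Finset.univ.filter fun k => x k = -1).card)}

/-- An `E₈`-representation of a graph: an injective map to `E₈` sending adjacent vertices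
to vectors with inner product `4` and non-adjacent vertices to orthogonal vectors. -/
def SimpleGraph.IsE8Rep {V : Type*} (G : SimpleGraph V) (f : V → Fin 8 → ℤ) : Prop :=
  Function.Injective f ∧ (∀ v, f v ∈ E8) ∧
    ∀ u v : V, u ≠ v →
      (G.Adj u v → ∑ i, f u i * f v i = 4) ∧ (¬ G.Adj u v → ∑ i, f u i * f v i = 0)

/-- The cone over a graph `G`: a universal vertex (`none`) is added to `G`. -/
def SimpleGraph.coneGraph {V : Type*} (G : SimpleGraph V) : SimpleGraph (Option V) where
  Adj x y := match x, y with
    | none, none => False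
    | none, some _ => True
    | some _, none => True
    | some u, some v => G.Adj u v
  symm := by
    refine ⟨?_⟩
    rintro (_ | u) (_ | v) h
    · exact h
    · trivial
    · trivial
    · exact h.symm
  loopless := by
    refine ⟨?_⟩
    rintro (_ | u) h
    · exact h
    · exact G.loopless.irrefl u h

namespace E8Aux
open Finset

def ip (x y : Fin 8 → ℤ) : ℤ := ∑ i, x i * y i

lemma ip_comm (x y : Fin 8 → ℤ) : ip x y = ip y x := by
  simp [ip, mul_comm]

lemma ip_sub_left (x y z : Fin 8 → ℤ) : ip (fun k => x k - y k) z = ip x z - ip y z := by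
  simp [ip, sub_mul, Finset.sum_sub_distrib]

lemma ip_sub_right (x y z : Fin 8 → ℤ) : ip x (fun k => y k - z k) = ip x y - ip x z := by
  simp [ip, mul_sub, Finset.sum_sub_distrib]

def oneV : Fin 8 → ℤ := fun _ => 1

lemma ip_one_right (x : Fin 8 → ℤ) : ip x oneV = ∑ k, x k := by simp [ip, oneV]
lemma ip_one_left (x : Fin 8 → ℤ) : ip oneV x = ∑ k, x k := by simp [ip, oneV]

lemma ite_or_split {i j : Fin 8} (hij : i ≠ j) (c : Fin 8 → ℤ) (m : Fin 8) :
    (if m = i ∨ m = j then c m else 0)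
      = (if m = i then c m else 0) + (if m = j then c m else 0) := by
  by_cases h1 : m = i <;> by_cases h2 : m = j
  · exact absurd (h1 ▸ h2) hij
  · simp only [h1, if_true, true_or]
    rw [if_neg (by simpa [h1] using h2), add_zero]
  · simp only [h2, if_true, or_true]
    rw [if_neg (by simpa [h2] using h1), zero_add]
  · simp [h1, h2]

/-- workhorse: sum of an "if k = i or k = j" function -/
lemma sum_or {i j : Fin 8} (hij : i ≠ j) (c : Fin 8 → ℤ) :
    ∑ m, (if m = i ∨ m = j then c m else 0) = c i + c j := by
  rw [Finset.sum_congr rfl (fun m _ => ite_or_split hij c m), Finset.sum_add_distrib]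
  simp

/-- the "lattice" characterization of E8 -/
def InL (x : Fin 8 → ℤ) : Prop :=
  ((∀ k, Even (x k)) ∨ (∀ k, Odd (x k))) ∧ (4 ∣ ∑ k, x k)

lemma sum_eq_card (x : Fin 8 → ℤ) (h1 : ∀ k, x k = 1 ∨ x k = -1) :
    ∑ k, x k = 8 - 2 * ((Finset.univ.filter fun k => x k = -1).card : ℤ) := by
  have h : ∀ k : Fin 8, x k = 1 - 2 * (if x k = -1 then 1 else 0) := by
    intro k; rcases h1 k with h | h <;> simp [h]
  rw [Finset.sum_congr rfl (fun k _ => h k), Finset.sum_sub_distrib, ← Finset.mul_sum,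
    Finset.sum_boole]
  simp

lemma bound_of_norm (x : Fin 8 → ℤ) (hnorm : ip x x = 8) (k : Fin 8) :
    -2 ≤ x k ∧ x k ≤ 2 := by
  have hb : x k * x k ≤ 8 := by
    calc x k * x k ≤ ∑ i, x i * x i :=
          Finset.single_le_sum (fun (i : Fin 8) _ => mul_self_nonneg (x i))
            (Finset.mem_univ k)
      _ = 8 := hnorm
  constructor <;> nlinarith

lemma mem_E8_iff (x : Fin 8 → ℤ) : x ∈ E8 ↔ InL x ∧ ip x x = 8 := by
  constructor
  · rintro (⟨i, j, hij, hi, hj, hz⟩ | ⟨h1, h2⟩)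
    · have hx : ∀ k, x k = if k = i ∨ k = j then x k else 0 := by
        intro k
        by_cases h1 : k = i
        · simp [h1]
        · by_cases h2 : k = j
          · simp [h2]
          · simp [h1, h2, hz k h1 h2]
      constructor
      · constructor
        · left; intro k
          by_cases h1 : k = i
          · subst h1; rcases hi with h | h <;> simp [h]
          · by_cases h2 : k = j
            · subst h2; rcases hj with h | h <;> simp [h]
            · simp [hz k h1 h2]
        · have heq : ∑ k, x k = ∑ k, (if k = i ∨ k = j then x k else 0) :=
            Finset.sum_congr rfl (fun k _ => hx k)
          rw [heq, sum_or hij]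
          rcases hi with h | h <;> rcases hj with h' | h' <;> rw [h, h'] <;> decide
      · have heq : ∀ k, x k * x k = if k = i ∨ k = j then x k * x k else 0 := by
          intro k
          by_cases h1 : k = i
          · simp [h1]
          · by_cases h2 : k = j
            · simp [h2]
            · simp [h1, h2, hz k h1 h2]
        unfold ip
        rw [Finset.sum_congr rfl (fun k _ => heq k), sum_or hij]
        rcases hi with h | h <;> rcases hj with h' | h' <;> rw [h, h'] <;> decide
    · constructor
      · constructor
        · right; intro k; rcases h1 k with h | h <;> simp [h]
        · rw [sum_eq_card x h1]
          obtain ⟨m, hm⟩ := h2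
          rw [hm]; push_cast; ring_nf; omega
      · unfold ip
        have : ∀ k : Fin 8, x k * x k = 1 := by
          intro k; rcases h1 k with h | h <;> simp [h]
        rw [Finset.sum_congr rfl (fun k _ => this k)]; simp
  · rintro ⟨⟨hpar | hpar, hsum⟩, hnorm⟩
    · -- even case
      have hval : ∀ k, x k = 2 ∨ x k = -2 ∨ x k = 0 := by
        intro k
        have h2 := bound_of_norm x hnorm k
        obtain ⟨m, hm⟩ := hpar k
        omega
      have hsq : ∀ k : Fin 8, x k * x k = 4 * (if ¬ x k = 0 then 1 else 0) := by
        intro k; rcases hval k with h | h | h <;> simp [h]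
      have hcard : (Finset.univ.filter fun k : Fin 8 => ¬ x k = 0).card = 2 := by
        have h8 : (8 : ℤ) = 4 * ((Finset.univ.filter fun k : Fin 8 => ¬ x k = 0).card : ℤ) := by
          rw [← hnorm]
          unfold ip
          rw [Finset.sum_congr rfl (fun k _ => hsq k), ← Finset.mul_sum, Finset.sum_boole]
        have : ((Finset.univ.filter fun k : Fin 8 => ¬ x k = 0).card : ℤ) = 2 := by omega
        exact_mod_cast this
      obtain ⟨i, j, hij, hset⟩ := Finset.card_eq_two.mp hcard
      have hmem : ∀ k : Fin 8, ¬ x k = 0 ↔ (k = i ∨ k = j) := by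
        intro k
        constructor
        · intro hk
          have : k ∈ Finset.univ.filter fun k : Fin 8 => ¬ x k = 0 := by
            simp [hk]
          rw [hset] at this
          simpa using this
        · intro hk
          have : k ∈ ({i, j} : Finset (Fin 8)) := by simpa using hk
          rw [← hset] at this
          simpa using this
      left
      refine ⟨i, j, hij, ?_, ?_, ?_⟩
      · have hi := (hmem i).mpr (Or.inl rfl); rcases hval i with h | h | h <;> tauto
      · have hj := (hmem j).mpr (Or.inr rfl); rcases hval j with h | h | h <;> tauto
      · intro k hk1 hk2
        by_contra hk
        rcases (hmem k).mp hk with h | h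
        · exact hk1 h
        · exact hk2 h
    · -- odd case
      have hval : ∀ k, x k = 1 ∨ x k = -1 := by
        intro k
        have h2 := bound_of_norm x hnorm k
        obtain ⟨m, hm⟩ := hpar k
        omega
      refine Or.inr ⟨hval, ?_⟩
      have := sum_eq_card x hval
      rw [this] at hsum
      obtain ⟨t, ht⟩ := hsum
      rw [Nat.even_iff]
      omega

end E8Aux

namespace E8Aux
open Finset

lemma norm_div (x : Fin 8 → ℤ) (hx : InL x) : 8 ∣ ip x x := by
  obtain ⟨hpar | hpar, hsum⟩ := hx
  · set w : Fin 8 → ℤ := fun k => x k / 2 with hw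
    have hxe : ∀ k, x k = 2 * w k := by
      intro k; obtain ⟨m, hm⟩ := hpar k; simp only [hw]; omega
    have h1 : ip x x = 4 * ∑ k, w k * w k := by
      unfold ip
      rw [Finset.mul_sum]
      exact Finset.sum_congr rfl fun k _ => by rw [hxe k]; ring
    have h2 : ∑ k, x k = 2 * ∑ k, w k := by
      rw [Finset.mul_sum]; exact Finset.sum_congr rfl fun k _ => hxe k
    have h3 : (2:ℤ) ∣ ∑ k, w k := by
      obtain ⟨t, ht⟩ := hsum; rw [h2] at ht; exact ⟨t, by omega⟩
    have h4 : (2:ℤ) ∣ ∑ k, w k * w k := by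
      have hterm : ∀ k : Fin 8, (2:ℤ) ∣ (w k * w k - w k) := by
        intro k
        rcases Int.even_or_odd (w k) with ⟨m, hm⟩ | ⟨m, hm⟩
        · exact ⟨2*m*m - m, by rw [hm]; ring⟩
        · exact ⟨2*m*m + m, by rw [hm]; ring⟩
      have hd : (2:ℤ) ∣ ∑ k, (w k * w k - w k) := Finset.dvd_sum fun k _ => hterm k
      rw [Finset.sum_sub_distrib] at hd
      omega
    rw [h1]
    obtain ⟨t, ht⟩ := h4
    exact ⟨t, by rw [ht]; ring⟩
  · have h1 : ∀ k : Fin 8, (8:ℤ) ∣ (x k * x k - 1) := by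
      intro k
      obtain ⟨m, hm⟩ := hpar k
      rcases Int.even_or_odd m with ⟨t, ht⟩ | ⟨t, ht⟩
      · exact ⟨t * (m + 1), by rw [hm, ht]; ring⟩
      · exact ⟨m * (t + 1), by rw [hm, ht]; ring⟩
    have hd : (8:ℤ) ∣ ∑ k, (x k * x k - 1) := Finset.dvd_sum fun k _ => h1 k
    rw [Finset.sum_sub_distrib] at hd
    simp only [Finset.sum_const, Finset.card_univ, Fintype.card_fin, nsmul_eq_mul] at hd
    unfold ip
    omega

lemma InL_add (x y : Fin 8 → ℤ) (hx : InL x) (hy : InL y)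
    (hpar : (∀ k, Even (x k + y k))) : InL (fun k => x k + y k) := by
  refine ⟨Or.inl hpar, ?_⟩
  rw [Finset.sum_add_distrib]
  exact Int.dvd_add hx.2 hy.2

lemma ip_add_add (x y : Fin 8 → ℤ) :
    ip (fun k => x k + y k) (fun k => x k + y k) = ip x x + 2 * ip x y + ip y y := by
  unfold ip
  rw [Finset.mul_sum, ← Finset.sum_add_distrib, ← Finset.sum_add_distrib]
  exact Finset.sum_congr rfl fun k _ => by ring

lemma pair_div (x y : Fin 8 → ℤ) (hx : InL x) (hy : InL y) : 4 ∣ ip x y := by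
  obtain ⟨hxp, hxs⟩ := hx
  obtain ⟨hyp, hys⟩ := hy
  rcases hxp with hxe | hxo
  · rcases hyp with hye | hyo
    · refine Finset.dvd_sum fun k _ => ?_
      obtain ⟨a, ha⟩ := hxe k; obtain ⟨b, hb⟩ := hye k
      exact ⟨a * b, by rw [ha, hb]; ring⟩
    · have h1 : ∀ k : Fin 8, (4:ℤ) ∣ (x k * y k - x k) := by
        intro k
        obtain ⟨a, ha⟩ := hxe k; obtain ⟨b, hb⟩ := hyo k
        exact ⟨a * b, by rw [ha, hb]; ring⟩
      have hd : (4:ℤ) ∣ ∑ k, (x k * y k - x k) := Finset.dvd_sum fun k _ => h1 k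
      rw [Finset.sum_sub_distrib] at hd
      unfold ip
      omega
  · rcases hyp with hye | hyo
    · have h1 : ∀ k : Fin 8, (4:ℤ) ∣ (x k * y k - y k) := by
        intro k
        obtain ⟨a, ha⟩ := hxo k; obtain ⟨b, hb⟩ := hye k
        exact ⟨a * b, by rw [ha, hb]; ring⟩
      have hd : (4:ℤ) ∣ ∑ k, (x k * y k - y k) := Finset.dvd_sum fun k _ => h1 k
      rw [Finset.sum_sub_distrib] at hd
      unfold ip
      omega
    · have hsum : InL (fun k => x k + y k) := by
        refine InL_add x y ⟨Or.inr hxo, hxs⟩ ⟨Or.inr hyo, hys⟩ fun k => ?_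
        obtain ⟨a, ha⟩ := hxo k; obtain ⟨b, hb⟩ := hyo k
        exact ⟨a + b + 1, by omega⟩
      have h8 := norm_div _ hsum
      rw [ip_add_add] at h8
      have hx8 := norm_div x ⟨Or.inr hxo, hxs⟩
      have hy8 := norm_div y ⟨Or.inr hyo, hys⟩
      omega

/-- sign flips preserve E8 -/
lemma flip_mem (ε x : Fin 8 → ℤ) (hε : ∀ k, ε k = 1 ∨ ε k = -1) (hεs : 4 ∣ ∑ k, ε k)
    (hx : x ∈ E8) : (fun k => ε k * x k) ∈ E8 := by
  rw [mem_E8_iff] at hx ⊢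
  obtain ⟨⟨hpar, hsum⟩, hnorm⟩ := hx
  have hεodd : ∀ k, Odd (ε k) := by
    intro k; rcases hε k with h | h
    · exact ⟨0, by rw [h]; ring⟩
    · exact ⟨-1, by rw [h]; ring⟩
  have hεL : InL ε := ⟨Or.inr hεodd, hεs⟩
  refine ⟨⟨?_, ?_⟩, ?_⟩
  · rcases hpar with h | h
    · exact Or.inl fun k => (h k).mul_left (ε k)
    · exact Or.inr fun k => (hεodd k).mul (h k)
  · have hh : ∑ k, ε k * x k = ip ε x := rfl
    rw [hh]
    exact pair_div ε x hεL ⟨hpar, hsum⟩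
  · have hterm : ∀ k : Fin 8, (ε k * x k) * (ε k * x k) = x k * x k := by
      intro k; rcases hε k with h | h <;> rw [h] <;> ring
    unfold ip at hnorm ⊢
    rw [Finset.sum_congr rfl fun k _ => hterm k]
    exact hnorm

lemma flip_ip (ε x y : Fin 8 → ℤ) (hε : ∀ k, ε k = 1 ∨ ε k = -1) :
    ip (fun k => ε k * x k) (fun k => ε k * y k) = ip x y := by
  unfold ip
  refine Finset.sum_congr rfl fun k _ => ?_
  show (ε k * x k) * (ε k * y k) = x k * y k
  rcases hε k with h | h <;> rw [h] <;> ring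

lemma ip_sub_smul (x y r : Fin 8 → ℤ) (t s : ℤ) :
    ip (fun k => x k - t * r k) (fun k => y k - s * r k)
      = ip x y - s * ip x r - t * ip r y + t * s * ip r r := by
  unfold ip
  rw [Finset.mul_sum, Finset.mul_sum, Finset.mul_sum, ← Finset.sum_sub_distrib,
    ← Finset.sum_sub_distrib, ← Finset.sum_add_distrib]
  refine Finset.sum_congr rfl fun k _ => ?_
  show (x k - t * r k) * (y k - s * r k)
      = x k * y k - s * (x k * r k) - t * (r k * y k) + t * s * (r k * r k)
  ring

/-- reflection in a root r -/
def refl (r : Fin 8 → ℤ) (x : Fin 8 → ℤ) : Fin 8 → ℤ :=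
  fun k => x k - (ip x r / 4) * r k

lemma refl_ip (r x y : Fin 8 → ℤ) (hr : r ∈ E8) (hx : InL x) (hy : InL y) :
    ip (refl r x) (refl r y) = ip x y := by
  rw [mem_E8_iff] at hr
  obtain ⟨hrL, hrn⟩ := hr
  obtain ⟨t, htx⟩ := pair_div x r hx hrL
  obtain ⟨s, hsy⟩ := pair_div y r hy hrL
  unfold refl
  rw [ip_sub_smul, hrn, ip_comm r y, htx, hsy]
  have h4 : (4:ℤ) * t / 4 = t := Int.mul_ediv_cancel_left t (by norm_num)
  have h5 : (4:ℤ) * s / 4 = s := Int.mul_ediv_cancel_left s (by norm_num)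
  rw [h4, h5]
  ring

lemma refl_mem (r x : Fin 8 → ℤ) (hr : r ∈ E8) (hx : x ∈ E8) : refl r x ∈ E8 := by
  have hrL := ((mem_E8_iff r).mp hr).1
  have hxm := (mem_E8_iff x).mp hx
  obtain ⟨hxL, hxn⟩ := hxm
  rw [mem_E8_iff]
  refine ⟨⟨?_, ?_⟩, ?_⟩
  · obtain ⟨hrp | hrp, _⟩ := hrL
    · rcases hxL.1 with hxp | hxp
      · exact Or.inl fun k => (hxp k).sub ((hrp k).mul_left _)
      · exact Or.inr fun k => (hxp k).sub_even ((hrp k).mul_left _)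
    · rcases Int.even_or_odd (ip x r / 4) with ht | ht
      · rcases hxL.1 with hxp | hxp
        · exact Or.inl fun k => (hxp k).sub (ht.mul_right _)
        · exact Or.inr fun k => (hxp k).sub_even (ht.mul_right _)
      · rcases hxL.1 with hxp | hxp
        · exact Or.inr fun k => (hxp k).sub_odd (ht.mul (hrp k))
        · exact Or.inl fun k => (hxp k).sub_odd (ht.mul (hrp k))
  · have hh : ∑ k, refl r x k = ∑ k, x k - (ip x r / 4) * ∑ k, r k := by
      unfold refl
      rw [Finset.sum_sub_distrib, ← Finset.mul_sum]
    rw [hh]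
    exact Int.dvd_sub hxL.2 (Dvd.dvd.mul_left hrL.2 _)
  · rw [refl_ip r x x hr hxL hxL, hxn]

end E8Aux

namespace E8Aux
open Finset

def Ev (i j : Fin 8) : Fin 8 → ℤ := fun k => if k = i ∨ k = j then 2 else 0

lemma ip_Ev_one {i j : Fin 8} (hij : i ≠ j) : ip (Ev i j) oneV = 4 := by
  unfold ip Ev oneV
  have h : ∀ m : Fin 8, (if m = i ∨ m = j then (2:ℤ) else 0) * 1
      = (if m = i ∨ m = j then (2:ℤ) else 0) := fun m => mul_one _
  rw [Finset.sum_congr rfl fun m _ => h m, sum_or hij]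
  norm_num

lemma ip_Ev_self {i j : Fin 8} (hij : i ≠ j) : ip (Ev i j) (Ev i j) = 8 := by
  unfold ip Ev
  have h : ∀ m : Fin 8, (if m = i ∨ m = j then (2:ℤ) else 0) * (if m = i ∨ m = j then (2:ℤ) else 0)
      = (if m = i ∨ m = j then (4:ℤ) else 0) := by
    intro m; by_cases h : m = i ∨ m = j <;> simp [h]
  rw [Finset.sum_congr rfl fun m _ => h m, sum_or hij]
  norm_num

lemma Ev_mem {i j : Fin 8} (hij : i ≠ j) : Ev i j ∈ E8 := by
  left
  refine ⟨i, j, hij, ?_, ?_, ?_⟩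
  · left; simp [Ev]
  · left; simp [Ev]
  · intro k h1 h2; simp [Ev, h1, h2]

lemma oneV_mem : oneV ∈ E8 := by
  right
  constructor
  · intro k; left; rfl
  · simp [oneV]

/-- the special root `Ev i j - 1` -/
lemma rE8 {i j : Fin 8} (hij : i ≠ j) : (fun k => Ev i j k - oneV k) ∈ E8 := by
  right
  constructor
  · intro k
    by_cases h : k = i ∨ k = j <;> simp [Ev, oneV, h]
  · have h : (Finset.univ.filter fun k : Fin 8 => Ev i j k - oneV k = -1)
        = Finset.univ.filter fun k : Fin 8 => ¬(k = i ∨ k = j) := by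
      apply Finset.filter_congr
      intro k _
      by_cases h : k = i ∨ k = j <;> simp [Ev, oneV, h]
    rw [h, Finset.filter_not, Finset.filter_or]
    simp only [Finset.filter_eq', Finset.mem_univ, if_true]
    have hcard : ((Finset.univ : Finset (Fin 8)) \ ({i} ∪ {j})).card = 6 := by
      rw [Finset.card_sdiff_of_subset (Finset.subset_univ _), Finset.card_union_of_disjoint
        (by simp only [Finset.disjoint_singleton]
            first
            | exact hij
            | exact Ne.symm hij)]
      simp
    rw [hcard]
    decide

lemma refl_Ev_eq_one {i j : Fin 8} (hij : i ≠ j) :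
    refl (fun k => Ev i j k - oneV k) (Ev i j) = oneV := by
  have hip : ip (Ev i j) (fun k => Ev i j k - oneV k) = 4 := by
    rw [ip_sub_right, ip_Ev_self hij, ip_Ev_one hij]
    norm_num
  unfold refl
  rw [hip]
  funext k
  show Ev i j k - 4 / 4 * (Ev i j k - oneV k) = oneV k
  norm_num

/-- given a sign vector flipping c to `Ev i j`, produce the normalizing map -/
lemma normalize_of_flip (c : Fin 8 → ℤ) (i j : Fin 8) (hij : i ≠ j) (ε : Fin 8 → ℤ)
    (hε : ∀ k, ε k = 1 ∨ ε k = -1) (hεs : 4 ∣ ∑ k, ε k)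
    (hflip : (fun k => ε k * c k) = Ev i j) :
    ∃ Φ : (Fin 8 → ℤ) → (Fin 8 → ℤ), (∀ x ∈ E8, Φ x ∈ E8) ∧
      (∀ x y, x ∈ E8 → y ∈ E8 → ip (Φ x) (Φ y) = ip x y) ∧ Φ c = oneV := by
  set r : Fin 8 → ℤ := fun k => Ev i j k - oneV k with hr
  refine ⟨fun x => refl r (fun k => ε k * x k), ?_, ?_, ?_⟩
  · intro x hx
    exact refl_mem r _ (rE8 hij) (flip_mem ε x hε hεs hx)
  · intro x y hx hy
    rw [refl_ip r _ _ (rE8 hij)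
      ((mem_E8_iff _).mp (flip_mem ε x hε hεs hx)).1
      ((mem_E8_iff _).mp (flip_mem ε y hε hεs hy)).1]
    exact flip_ip ε x y hε
  · show refl r (fun k => ε k * c k) = oneV
    rw [hflip]
    exact refl_Ev_eq_one hij

lemma sum_pm {a b : Fin 8} (hab : a ≠ b) :
    ∑ m, (if m = a ∨ m = b then (-1:ℤ) else 1) = 4 := by
  have h : ∀ m : Fin 8, (if m = a ∨ m = b then (-1:ℤ) else 1)
      = (if m = a ∨ m = b then (-2:ℤ) else 0) + 1 := by
    intro m; by_cases h : m = a ∨ m = b <;> simp [h]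
  rw [Finset.sum_congr rfl fun m _ => h m, Finset.sum_add_distrib, sum_or hab]
  decide

lemma exists_third (i j : Fin 8) : ∃ k, k ≠ i ∧ k ≠ j := by
  revert i j; decide

lemma exists_normalize (c : Fin 8 → ℤ) (hc : c ∈ E8) :
    ∃ Φ : (Fin 8 → ℤ) → (Fin 8 → ℤ), (∀ x ∈ E8, Φ x ∈ E8) ∧
      (∀ x y, x ∈ E8 → y ∈ E8 → ip (Φ x) (Φ y) = ip x y) ∧ Φ c = oneV := by
  rcases hc with ⟨i, j, hij, hi, hj, hz⟩ | ⟨h1, _⟩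
  · -- even type
    rcases hi with hi | hi <;> rcases hj with hj | hj
    · -- (2, 2): no flip
      refine normalize_of_flip c i j hij (fun _ => 1) (fun k => Or.inl rfl) (by simp) ?_
      funext k
      show 1 * c k = Ev i j k
      by_cases h1 : k = i
      · simp [Ev, h1, hi]
      · by_cases h2 : k = j
        · simp [Ev, h2, hj]
        · simp [Ev, h1, h2, hz k h1 h2]
    · -- (2, -2): flip at {j, k₀}
      obtain ⟨m, hmi, hmj⟩ := exists_third i j
      refine normalize_of_flip c i j hij (fun k => if k = j ∨ k = m then -1 else 1)
        (fun k => by by_cases h : k = j ∨ k = m <;> simp [h]) ?_ ?_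
      · rw [sum_pm (Ne.symm hmj)]
      · funext k
        show (if k = j ∨ k = m then (-1:ℤ) else 1) * c k = Ev i j k
        by_cases h1 : k = i
        · subst h1
          rw [if_neg (by tauto), one_mul, hi]
          simp [Ev]
        · by_cases h2 : k = j
          · subst h2
            rw [if_pos (Or.inl rfl), hj]
            simp [Ev]
          · by_cases h3 : k = m <;> simp [Ev, h1, h2, hz k h1 h2]
    · -- (-2, 2): flip at {i, k₀}
      obtain ⟨m, hmi, hmj⟩ := exists_third i j
      refine normalize_of_flip c i j hij (fun k => if k = i ∨ k = m then -1 else 1)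
        (fun k => by by_cases h : k = i ∨ k = m <;> simp [h]) ?_ ?_
      · rw [sum_pm (Ne.symm hmi)]
      · funext k
        show (if k = i ∨ k = m then (-1:ℤ) else 1) * c k = Ev i j k
        by_cases h1 : k = i
        · subst h1
          rw [if_pos (Or.inl rfl), hi]
          simp [Ev]
        · by_cases h2 : k = j
          · subst h2
            rw [if_neg (by tauto), one_mul, hj]
            simp [Ev]
          · by_cases h3 : k = m <;> simp [Ev, h1, h2, hz k h1 h2]
    · -- (-2, -2): flip at {i, j}
      refine normalize_of_flip c i j hij (fun k => if k = i ∨ k = j then -1 else 1)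
        (fun k => by by_cases h : k = i ∨ k = j <;> simp [h]) ?_ ?_
      · rw [sum_pm hij]
      · funext k
        show (if k = i ∨ k = j then (-1:ℤ) else 1) * c k = Ev i j k
        by_cases h1 : k = i
        · subst h1; rw [if_pos (Or.inl rfl), hi]; simp [Ev]
        · by_cases h2 : k = j
          · subst h2; rw [if_pos (Or.inr rfl), hj]; simp [Ev]
          · simp [Ev, h1, h2, hz k h1 h2]
  · -- odd type: flip by c itself
    have hcE8 : c ∈ E8 := Or.inr ⟨h1, by assumption⟩
    have hcs : 4 ∣ ∑ k, c k := ((mem_E8_iff c).mp hcE8).1.2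
    refine ⟨fun x => fun k => c k * x k, ?_, ?_, ?_⟩
    · intro x hx; exact flip_mem c x h1 hcs hx
    · intro x y _ _; exact flip_ip c x y h1
    · funext k
      show c k * c k = 1
      rcases h1 k with h | h <;> rw [h] <;> ring

end E8Aux

namespace E8Aux
open Finset

lemma ip_one_one : ip oneV oneV = 8 := by simp [ip, oneV]

def EV (p : Sym2 (Fin 8)) : Fin 8 → ℤ := fun k => if k ∈ p then 2 else 0

lemma EV_mk (i j : Fin 8) : EV s(i, j) = Ev i j :=
  funext fun k => by simp [EV, Ev, Sym2.mem_iff]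

lemma EV_mem {p : Sym2 (Fin 8)} (hp : ¬ p.IsDiag) : EV p ∈ E8 := by
  induction p using Sym2.ind with
  | _ i j =>
    rw [EV_mk]
    exact Ev_mem (by simpa [Sym2.mk_isDiag_iff] using hp)

lemma oneSubEV_mem {p : Sym2 (Fin 8)} (hp : ¬ p.IsDiag) :
    (fun k => oneV k - EV p k) ∈ E8 := by
  induction p using Sym2.ind with
  | _ i j =>
    have hij : i ≠ j := by simpa [Sym2.mk_isDiag_iff] using hp
    rw [EV_mk]
    right
    constructor
    · intro k; by_cases h : k = i ∨ k = j <;> simp [Ev, oneV, h]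
    · have h : (Finset.univ.filter fun k : Fin 8 => oneV k - Ev i j k = -1)
          = Finset.univ.filter fun k : Fin 8 => (k = i ∨ k = j) := by
        apply Finset.filter_congr
        intro k _
        by_cases h : k = i ∨ k = j <;> simp [Ev, oneV, h]
      rw [h, Finset.filter_or]
      simp only [Finset.filter_eq', Finset.mem_univ, if_true]
      rw [Finset.card_union_of_disjoint
        (by simp only [Finset.disjoint_singleton]
            first
            | exact hij
            | exact Ne.symm hij)]
      simp only [Finset.card_singleton]
      decide

lemma ip_one_EV {p : Sym2 (Fin 8)} (hp : ¬ p.IsDiag) : ip oneV (EV p) = 4 := by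
  induction p using Sym2.ind with
  | _ i j =>
    have hij : i ≠ j := by simpa [Sym2.mk_isDiag_iff] using hp
    rw [EV_mk, ip_comm]
    exact ip_Ev_one hij

lemma ip_EV_self {p : Sym2 (Fin 8)} (hp : ¬ p.IsDiag) : ip (EV p) (EV p) = 8 := by
  induction p using Sym2.ind with
  | _ i j =>
    have hij : i ≠ j := by simpa [Sym2.mk_isDiag_iff] using hp
    rw [EV_mk]
    exact ip_Ev_self hij

lemma ip_EV_cases {p q : Sym2 (Fin 8)} (hp : ¬ p.IsDiag) (hq : ¬ q.IsDiag) (hne : p ≠ q) :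
    ((∃ w, w ∈ p ∧ w ∈ q) → ip (EV p) (EV q) = 4) ∧
    (¬ (∃ w, w ∈ p ∧ w ∈ q) → ip (EV p) (EV q) = 0) := by
  induction p using Sym2.ind with
  | _ i j =>
  induction q using Sym2.ind with
  | _ k l =>
    have hij : i ≠ j := by simpa [Sym2.mk_isDiag_iff] using hp
    have hkl : k ≠ l := by simpa [Sym2.mk_isDiag_iff] using hq
    have hval : ip (EV s(i,j)) (EV s(k,l))
        = (if i = k ∨ i = l then (2:ℤ) else 0) * 2 + (if j = k ∨ j = l then (2:ℤ) else 0) * 2 := by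
      rw [EV_mk, EV_mk]
      unfold ip Ev
      have hterm : ∀ m : Fin 8,
          (if m = i ∨ m = j then (2:ℤ) else 0) * (if m = k ∨ m = l then 2 else 0)
            = (if m = i ∨ m = j then ((if m = k ∨ m = l then (2:ℤ) else 0) * 2) else 0) := by
        intro m; by_cases h : m = i ∨ m = j <;> simp [h, mul_comm]
      rw [Finset.sum_congr rfl fun m _ => hterm m, sum_or hij]
    have hmem : (∃ w, w ∈ s(i,j) ∧ w ∈ s(k,l)) ↔ ((i = k ∨ i = l) ∨ (j = k ∨ j = l)) := by
      simp only [Sym2.mem_iff]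
      constructor
      · rintro ⟨w, hw1 | hw1, hw2⟩ <;> subst hw1 <;> tauto
      · rintro ((h | h) | (h | h)) <;> [exact ⟨i, Or.inl rfl, Or.inl h⟩;
          exact ⟨i, Or.inl rfl, Or.inr h⟩; exact ⟨j, Or.inr rfl, Or.inl h⟩;
          exact ⟨j, Or.inr rfl, Or.inr h⟩]
    have hnotboth : ¬ ((i = k ∨ i = l) ∧ (j = k ∨ j = l)) := by
      rintro ⟨h1 | h1, h2 | h2⟩
      · exact hij (h1.trans h2.symm)
      · exact hne (by rw [h1, h2])
      · exact hne (by rw [h1, h2, Sym2.eq_swap])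
      · exact hij (h1.trans h2.symm)
    constructor
    · intro hsh
      rw [hval]
      rcases hmem.mp hsh with h1 | h2
      · rw [if_pos h1, if_neg (fun h2 => hnotboth ⟨h1, h2⟩)]; ring
      · rw [if_pos h2, if_neg (fun h1 => hnotboth ⟨h1, h2⟩)]; ring
    · intro hsh
      rw [hval]
      rw [if_neg (fun h => hsh (hmem.mpr (Or.inl h))),
        if_neg (fun h => hsh (hmem.mpr (Or.inr h)))]
      ring

lemma E8_norm {x : Fin 8 → ℤ} (hx : x ∈ E8) : ip x x = 8 := ((mem_E8_iff x).mp hx).2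

/-- classification of roots with inner product 4 with the all ones vector -/
lemma classify (x : Fin 8 → ℤ) (hx : x ∈ E8) (hs : ip oneV x = 4) :
    ∃ p : Sym2 (Fin 8), ¬ p.IsDiag ∧ (x = EV p ∨ x = fun k => oneV k - EV p k) := by
  rw [ip_one_left] at hs
  rcases hx with ⟨i, j, hij, hi, hj, hz⟩ | ⟨h1, h2⟩
  · have hsum : ∑ k, x k = x i + x j := by
      have hx' : ∀ k, x k = if k = i ∨ k = j then x k else 0 := by
        intro k
        by_cases h1 : k = i
        · simp [h1]
        · by_cases h2 : k = j
          · simp [h2]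
          · simp [h1, h2, hz k h1 h2]
      rw [Finset.sum_congr rfl fun k _ => hx' k, sum_or hij]
    rw [hsum] at hs
    have hi2 : x i = 2 := by rcases hi with h | h <;> rcases hj with h' | h' <;> omega
    have hj2 : x j = 2 := by rcases hi with h | h <;> rcases hj with h' | h' <;> omega
    refine ⟨s(i, j), by simpa [Sym2.mk_isDiag_iff] using hij, Or.inl ?_⟩
    rw [EV_mk]
    funext k
    by_cases h1 : k = i
    · subst h1; simp [Ev, hi2]
    · by_cases h2 : k = j
      · subst h2; simp [Ev, hj2]
      · simp [Ev, h1, h2, hz k h1 h2]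
  · rw [sum_eq_card x h1] at hs
    have hcard : (Finset.univ.filter fun k => x k = -1).card = 2 := by omega
    obtain ⟨i, j, hij, hset⟩ := Finset.card_eq_two.mp hcard
    have hmem : ∀ k : Fin 8, x k = -1 ↔ (k = i ∨ k = j) := by
      intro k
      constructor
      · intro hk
        have : k ∈ Finset.univ.filter fun k => x k = -1 := by simp [hk]
        rw [hset] at this
        simpa using this
      · intro hk
        have : k ∈ ({i, j} : Finset (Fin 8)) := by simpa using hk
        rw [← hset] at this
        simpa using this
    refine ⟨s(i, j), by simpa [Sym2.mk_isDiag_iff] using hij, Or.inr ?_⟩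
    rw [EV_mk]
    funext k
    by_cases h : k = i ∨ k = j
    · rw [(hmem k).mpr h]
      simp [Ev, oneV, h]
    · have : x k = 1 := by
        rcases h1 k with h' | h'
        · exact h'
        · exact absurd ((hmem k).mp h') h
      rw [this]
      simp [Ev, oneV, h]

end E8Aux

namespace E8Aux
open Finset SimpleGraph

lemma rep_of_ip {V : Type*} (G : SimpleGraph V) (f : V → Fin 8 → ℤ)
    (hmem : ∀ v, f v ∈ E8)
    (h : ∀ u v, u ≠ v → (G.Adj u v → ip (f u) (f v) = 4) ∧ (¬ G.Adj u v → ip (f u) (f v) = 0)) :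
    G.IsE8Rep f := by
  refine ⟨?_, hmem, h⟩
  intro a b hab
  by_contra hne
  have h8 : ip (f a) (f b) = 8 := by rw [hab]; exact E8_norm (hmem b)
  rcases h a b hne with ⟨h4, h0⟩
  by_cases hadj : G.Adj a b
  · rw [h4 hadj] at h8; norm_num at h8
  · rw [h0 hadj] at h8; norm_num at h8

open Classical in
lemma forward {V : Type*} (G : SimpleGraph V) (H : SimpleGraph (Fin 8)) (X : Set H.edgeSet)
    (e : G ≃g H.lineGraph.seidelSwitch X) : ∃ f : Option V → Fin 8 → ℤ, G.coneGraph.IsE8Rep f := by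
  set F : V → Fin 8 → ℤ := fun v =>
    if e v ∈ X then (fun k => oneV k - EV (e v : Sym2 (Fin 8)) k) else EV (e v : Sym2 (Fin 8))
    with hF
  have hdiag : ∀ v : V, ¬ (e v : Sym2 (Fin 8)).IsDiag :=
    fun v => H.not_isDiag_of_mem_edgeSet (e v).2
  have hFmem : ∀ v, F v ∈ E8 := by
    intro v
    rw [hF]
    by_cases h : e v ∈ X
    · simpa [h] using oneSubEV_mem (hdiag v)
    · simpa [h] using EV_mem (hdiag v)
  have hFone : ∀ v, ip oneV (F v) = 4 := by
    intro v
    rw [hF]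
    by_cases h : e v ∈ X
    · simp only [h, if_true]
      rw [ip_sub_right, ip_one_one, ip_one_EV (hdiag v)]
      norm_num
    · simp only [h, if_false]
      exact ip_one_EV (hdiag v)
  refine ⟨fun o => Option.elim o oneV F, ?_⟩
  apply rep_of_ip
  · rintro (_ | v)
    · exact oneV_mem
    · exact hFmem v
  · rintro (_ | u) (_ | v) hne
    · exact absurd rfl hne
    · constructor
      · intro _; exact hFone v
      · intro h; exact absurd trivial h
    · constructor
      · intro _; rw [ip_comm]; exact hFone u
      · intro h; exact absurd trivial h
    · -- both some
      have huv : u ≠ v := fun h => hne (by rw [h])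
      have heuv : e u ≠ e v := fun h => huv (e.toEquiv.injective h)
      have hpq : (e u : Sym2 (Fin 8)) ≠ (e v : Sym2 (Fin 8)) :=
        fun h => heuv (Subtype.ext h)
      have hadj : G.coneGraph.Adj (some u) (some v) ↔ G.Adj u v := Iff.rfl
      have hG : G.Adj u v ↔ (H.lineGraph.seidelSwitch X).Adj (e u) (e v) :=
        (e.map_rel_iff).symm
      have hsw : (H.lineGraph.seidelSwitch X).Adj (e u) (e v) ↔
          (H.lineGraph.Adj (e u) (e v) ↔ ¬ Xor' (e u ∈ X) (e v ∈ X)) := by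
        constructor
        · intro h; exact (h : e u ≠ e v ∧ (H.lineGraph.Adj (e u) (e v) ↔ ¬ Xor' (e u ∈ X) (e v ∈ X))).2
        · intro h; exact (⟨heuv, h⟩ : e u ≠ e v ∧ (H.lineGraph.Adj (e u) (e v) ↔ ¬ Xor' (e u ∈ X) (e v ∈ X)))
      have hline : H.lineGraph.Adj (e u) (e v) ↔
          (∃ w, w ∈ (e u : Sym2 (Fin 8)) ∧ w ∈ (e v : Sym2 (Fin 8))) := by
        rw [lineGraph_adj_iff_exists]
        exact ⟨fun h => h.2, fun h => ⟨heuv, h⟩⟩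
      obtain ⟨hc4, hc0⟩ := ip_EV_cases (hdiag u) (hdiag v) hpq
      -- compute ip in all four cases
      have hip : ip (F u) (F v) =
          if Xor' (e u ∈ X) (e v ∈ X)
          then 4 - ip (EV (e u : Sym2 (Fin 8))) (EV (e v : Sym2 (Fin 8)))
          else ip (EV (e u : Sym2 (Fin 8))) (EV (e v : Sym2 (Fin 8))) := by
        rw [hF]
        by_cases h1 : e u ∈ X <;> by_cases h2 : e v ∈ X <;>
          simp only [h1, h2, if_true, if_false]
        · rw [if_neg (by simp [Xor', h1, h2])]
          rw [ip_sub_left, ip_sub_right, ip_sub_right, ip_one_one,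
            ip_one_EV (hdiag v), ip_comm _ oneV, ip_one_EV (hdiag u)]
          try ring
        · rw [if_pos (by simp [Xor', h1, h2])]
          rw [ip_sub_left, ip_one_EV (hdiag v)]
          try ring
        · rw [if_pos (by simp [Xor', h1, h2])]
          rw [ip_sub_right, ip_comm _ oneV, ip_one_EV (hdiag u)]
          try ring
        · rw [if_neg (by simp [Xor', h1, h2])]
      rw [hadj]
      constructor
      · intro hGuv
        show ip (F u) (F v) = 4
        have hiff := (hsw.mp (hG.mp hGuv))
        by_cases hx : Xor' (e u ∈ X) (e v ∈ X)
        · have hnl : ¬ H.lineGraph.Adj (e u) (e v) := fun h => (hiff.mp h) hx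
          have h0 := hc0 (fun h => hnl (hline.mpr h))
          rw [hip, if_pos hx, h0]
          norm_num
        · have hl : H.lineGraph.Adj (e u) (e v) := hiff.mpr hx
          have h4 := hc4 (hline.mp hl)
          rw [hip, if_neg hx, h4]
      · intro hGuv
        show ip (F u) (F v) = 0
        have hniff : ¬ (H.lineGraph.Adj (e u) (e v) ↔ ¬ Xor' (e u ∈ X) (e v ∈ X)) :=
          fun h => hGuv (hG.mpr (hsw.mpr h))
        by_cases hx : Xor' (e u ∈ X) (e v ∈ X)
        · have hl : H.lineGraph.Adj (e u) (e v) := by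
            by_contra hnl
            exact hniff ⟨fun h => absurd h hnl, fun h => absurd hx h⟩
          have h4 := hc4 (hline.mp hl)
          rw [hip, if_pos hx, h4]
          ring
        · have hnl : ¬ H.lineGraph.Adj (e u) (e v) := by
            intro hl
            exact hniff ⟨fun _ => hx, fun _ => hl⟩
          have h0 := hc0 (fun h => hnl (hline.mpr h))
          rw [hip, if_neg hx, h0]

end E8Aux

namespace E8Aux
open Finset SimpleGraph

lemma shapes_ne {p : Sym2 (Fin 8)} (hp : ¬ p.IsDiag) :
    EV p ≠ fun k => oneV k - EV p k := by
  induction p using Sym2.ind with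
  | _ a b =>
    intro h
    have hh := congrFun h a
    simp [EV, oneV, Sym2.mem_iff] at hh

lemma backward {V : Type*} (G : SimpleGraph V) (f : Option V → Fin 8 → ℤ)
    (hf : G.coneGraph.IsE8Rep f) :
    ∃ (H : SimpleGraph (Fin 8)) (X : Set H.edgeSet),
      Nonempty (G ≃g H.lineGraph.seidelSwitch X) := by
  classical
  obtain ⟨hinj, hmem, hcond⟩ := hf
  obtain ⟨Φ, hΦmem, hΦip, hΦone⟩ := exists_normalize (f none) (hmem none)
  set g : Option V → Fin 8 → ℤ := fun o => Φ (f o) with hg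
  have hgmem : ∀ o, g o ∈ E8 := fun o => hΦmem _ (hmem o)
  have hgip : ∀ o o', ip (g o) (g o') = ip (f o) (f o') :=
    fun o o' => hΦip _ _ (hmem o) (hmem o')
  have hgcond : ∀ u v : Option V, u ≠ v →
      (G.coneGraph.Adj u v → ip (g u) (g v) = 4) ∧
      (¬ G.coneGraph.Adj u v → ip (g u) (g v) = 0) := by
    intro u v huv
    obtain ⟨h4, h0⟩ := hcond u v huv
    exact ⟨fun h => by rw [hgip]; exact h4 h, fun h => by rw [hgip]; exact h0 h⟩
  have hgone : g none = oneV := hΦone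
  have hcl : ∀ v : V, ∃ p : Sym2 (Fin 8), ¬ p.IsDiag ∧
      (g (some v) = EV p ∨ g (some v) = fun k => oneV k - EV p k) := by
    intro v
    apply classify _ (hgmem (some v))
    have h := (hgcond none (some v) (by simp)).1 trivial
    rw [← hgone]
    exact h
  choose pv hpdiag hpshape using hcl
  have hknorm : ∀ p : Sym2 (Fin 8), ¬ p.IsDiag →
      ip (EV p) (fun k => oneV k - EV p k) = -4 := by
    intro p hp
    rw [ip_sub_right, ip_comm _ oneV, ip_one_EV hp, ip_EV_self hp]
    try ring
  have hpinj : ∀ u v : V, pv u = pv v → u = v := by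
    intro u v hpv
    by_contra huv
    have hne : (some u : Option V) ≠ some v := fun h => huv (Option.some_injective V h)
    have hval : ip (g (some u)) (g (some v)) = 4 ∨ ip (g (some u)) (g (some v)) = 0 := by
      by_cases h : G.coneGraph.Adj (some u) (some v)
      · exact Or.inl ((hgcond _ _ hne).1 h)
      · exact Or.inr ((hgcond _ _ hne).2 h)
    have hguv : g (some u) ≠ g (some v) := by
      intro h
      have h8 : ip (g (some u)) (g (some v)) = 8 := by
        rw [h]; exact E8_norm (hgmem _)
      rcases hval with h' | h' <;> omega
    rcases hpshape u with hu | hu <;> rcases hpshape v with hv | hv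
    · exact hguv (by rw [hu, hv, hpv])
    · have hm4 : ip (g (some u)) (g (some v)) = -4 := by
        rw [hu, hv, ← hpv]; exact hknorm _ (hpdiag u)
      rcases hval with h' | h' <;> omega
    · have hm4 : ip (g (some u)) (g (some v)) = -4 := by
        rw [hu, hv, ← hpv, ip_comm]; exact hknorm _ (hpdiag u)
      rcases hval with h' | h' <;> omega
    · exact hguv (by rw [hu, hv, hpv])
  set H : SimpleGraph (Fin 8) := {
    Adj := fun a b => a ≠ b ∧ ∃ v, pv v = s(a, b)
    symm := ⟨by
      rintro a b ⟨hab, v, hv⟩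
      exact ⟨hab.symm, v, hv.trans Sym2.eq_swap⟩⟩
    loopless := ⟨fun a h => h.1 rfl⟩ } with hH
  have hedge : ∀ v : V, pv v ∈ H.edgeSet := by
    intro v
    have h : ∀ p : Sym2 (Fin 8), ¬ p.IsDiag → (∃ w, pv w = p) → p ∈ H.edgeSet := by
      intro p
      induction p using Sym2.ind with
      | _ a b =>
        intro hp hw
        rw [SimpleGraph.mem_edgeSet]
        exact ⟨by simpa [Sym2.mk_isDiag_iff] using hp, hw⟩
    exact h _ (hpdiag v) ⟨v, rfl⟩
  set φ : V → H.edgeSet := fun v => ⟨pv v, hedge v⟩ with hφ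
  have hφbij : Function.Bijective φ := by
    constructor
    · intro u v h
      exact hpinj u v (congrArg Subtype.val h)
    · rintro ⟨p, hp⟩
      have h : ∀ q : Sym2 (Fin 8), q ∈ H.edgeSet → ∃ v, pv v = q := by
        intro q
        induction q using Sym2.ind with
        | _ a b => exact fun hq => (H.mem_edgeSet.mp hq).2
      obtain ⟨v, hv⟩ := h p hp
      exact ⟨v, Subtype.ext hv⟩
  set X : Set H.edgeSet := {E | ∃ v, pv v = (E : Sym2 (Fin 8)) ∧
      g (some v) = fun k => oneV k - EV (E : Sym2 (Fin 8)) k} with hX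
  have hXiff : ∀ v : V, (φ v ∈ X ↔ g (some v) = fun k => oneV k - EV (pv v) k) := by
    intro v
    constructor
    · rintro ⟨w, hw1, hw2⟩
      have hwv : w = v := hpinj w v hw1
      subst hwv
      exact hw2
    · intro h
      exact ⟨v, rfl, h⟩
  refine ⟨H, X, ⟨⟨Equiv.ofBijective φ hφbij, ?_⟩⟩⟩
  intro u v
  show (H.lineGraph.seidelSwitch X).Adj (φ u) (φ v) ↔ G.Adj u v
  by_cases huv : u = v
  · subst huv
    constructor
    · intro h; exact absurd rfl h.1
    · intro h; exact absurd h (G.loopless.irrefl u)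
  · have hne : (some u : Option V) ≠ some v := fun h => huv (Option.some_injective V h)
    have hpne : pv u ≠ pv v := fun h => huv (hpinj u v h)
    have hφne : φ u ≠ φ v := fun h => hpne (congrArg Subtype.val h)
    obtain ⟨hc4, hc0⟩ := ip_EV_cases (hpdiag u) (hpdiag v) hpne
    have hXu := hXiff u
    have hXv := hXiff v
    have hip : ip (g (some u)) (g (some v)) =
        if Xor' (φ u ∈ X) (φ v ∈ X) then 4 - ip (EV (pv u)) (EV (pv v))
        else ip (EV (pv u)) (EV (pv v)) := by
      rcases hpshape u with hu | hu <;> rcases hpshape v with hv | hv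
      · have hxu : φ u ∉ X := fun hxx => shapes_ne (hpdiag u) (hu.symm.trans (hXu.mp hxx))
        have hxv : φ v ∉ X := fun hxx => shapes_ne (hpdiag v) (hv.symm.trans (hXv.mp hxx))
        rw [if_neg (by simp [Xor', hxu, hxv]), hu, hv]
      · have hxu : φ u ∉ X := fun hxx => shapes_ne (hpdiag u) (hu.symm.trans (hXu.mp hxx))
        have hxv : φ v ∈ X := hXv.mpr hv
        rw [if_pos (by simp [Xor', hxu, hxv]), hu, hv]
        rw [ip_sub_right, ip_comm _ oneV, ip_one_EV (hpdiag u)]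
      · have hxu : φ u ∈ X := hXu.mpr hu
        have hxv : φ v ∉ X := fun hxx => shapes_ne (hpdiag v) (hv.symm.trans (hXv.mp hxx))
        rw [if_pos (by simp [Xor', hxu, hxv]), hu, hv]
        rw [ip_sub_left, ip_one_EV (hpdiag v)]
      · have hxu : φ u ∈ X := hXu.mpr hu
        have hxv : φ v ∈ X := hXv.mpr hv
        rw [if_neg (by simp [Xor', hxu, hxv]), hu, hv]
        rw [ip_sub_left, ip_sub_right, ip_sub_right, ip_one_one,
          ip_one_EV (hpdiag v), ip_comm _ oneV, ip_one_EV (hpdiag u)]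
        try ring
    have hGiff : G.Adj u v ↔ ip (g (some u)) (g (some v)) = 4 := by
      constructor
      · exact fun h => (hgcond _ _ hne).1 h
      · intro h
        by_contra hnadj
        have h0 := (hgcond _ _ hne).2 hnadj
        omega
    have hshared : (∃ w, w ∈ pv u ∧ w ∈ pv v) ↔ ip (EV (pv u)) (EV (pv v)) = 4 := by
      constructor
      · exact hc4
      · intro h
        by_contra hns
        have h0 := hc0 hns
        omega
    have hlineiff : H.lineGraph.Adj (φ u) (φ v) ↔ (∃ w, w ∈ pv u ∧ w ∈ pv v) := by
      rw [SimpleGraph.lineGraph_adj_iff_exists]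
      exact ⟨fun h => h.2, fun h => ⟨hφne, h⟩⟩
    constructor
    · rintro ⟨-, hiff⟩
      rw [hGiff, hip]
      by_cases hx : Xor' (φ u ∈ X) (φ v ∈ X)
      · rw [if_pos hx]
        have hnl : ¬ H.lineGraph.Adj (φ u) (φ v) := fun h => (hiff.mp h) hx
        have h0 : ip (EV (pv u)) (EV (pv v)) = 0 :=
          hc0 (fun h => hnl (hlineiff.mpr h))
        omega
      · rw [if_neg hx]
        exact hshared.mp (hlineiff.mp (hiff.mpr hx))
    · intro hadjG
      refine ⟨hφne, ?_⟩
      have h4 : ip (g (some u)) (g (some v)) = 4 := hGiff.mp hadjG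
      rw [hip] at h4
      by_cases hx : Xor' (φ u ∈ X) (φ v ∈ X)
      · rw [if_pos hx] at h4
        constructor
        · intro hl
          have hA := hshared.mp (hlineiff.mp hl)
          omega
        · intro hnx
          exact absurd hx hnx
      · rw [if_neg hx] at h4
        constructor
        · intro _; exact hx
        · intro _; exact hlineiff.mpr (hshared.mpr h4)

end E8Aux

/-- A graph `G` is switching-equivalent to the line graph of a graph on eight vertices
if and only if the cone over `G` is `E₈`-representable. -/
theorem switchingClass_lineGraph_iff_cone_E8Rep {V : Type*} (G : SimpleGraph V) :
    (∃ (H : SimpleGraph (Fin 8)) (X : Set H.edgeSet),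
        Nonempty (G ≃g H.lineGraph.seidelSwitch X)) ↔
      ∃ f : Option V → Fin 8 → ℤ, G.coneGraph.IsE8Rep f := by
  constructor
  · rintro ⟨H, X, ⟨e⟩⟩
    exact E8Aux.forward G H X e
  · rintro ⟨f, hf⟩
    exact E8Aux.backward G f hf
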